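/- If f : R^d → R is bounded below by some constant c on the search set, then the step sizes of the randomized barycenter algorithm satisfy ‖x̂_n - x̂_{n-1}‖ ≤ (exp(-ν c)/m_{n-1}) ‖z_n‖; in particular, if additionally f is bounded above and the curiosities z_n are uniformly bounded, then ‖x̂_n - x̂_{n-1}‖ → 0 as n → ∞. -/
import Mathlib


theorem barycenter_step_bound_and_vanishing
    (d : ℕ) (f : (Fin d → ℝ) → ℝ) (ν c C M : ℝ) (hν : 0 < ν)
    (hf : ∀ y, c ≤ f y ∧ f y ≤ C)
    (x z xh : ℕ → EuclideanSpace ℝ (Fin d)) (m : ℕ → ℝ)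
    (hM : ∀ n, ‖z n‖ ≤ M)
    (hm0 : m 0 = 0)
    (hm : ∀ n ≥ 1, m n = m (n - 1) + Real.exp (-ν * f (x n)))
    (hx : ∀ n ≥ 1, x n = xh (n - 1) + z n)
    (hstep : ∀ n ≥ 1, xh n - xh (n - 1) = (Real.exp (-ν * f (x n)) / m n) • z n) :
    (∀ n ≥ 2, ‖xh n - xh (n - 1)‖ ≤ (Real.exp (-ν * c) / m (n - 1)) * ‖z n‖) ∧
      Filter.Tendsto (fun n => ‖xh n - xh (n - 1)‖) Filter.atTop (nhds 0) := by
  set E := Real.exp (-ν * C) with hE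
  have hEpos : 0 < E := Real.exp_pos _
  -- lower bound on m
  have hmge : ∀ n : ℕ, (n : ℝ) * E ≤ m n := by
    intro n
    induction n with
    | zero => simp [hm0]
    | succ k ih =>
        have h1 : m (k + 1) = m k + Real.exp (-ν * f (x (k + 1))) := by
          simpa using hm (k + 1) (Nat.le_add_left 1 k)
        have hEle : E ≤ Real.exp (-ν * f (x (k + 1))) := by
          apply Real.exp_le_exp.2
          have := (hf (x (k + 1))).2
          nlinarith [hν.le]
        push_cast
        nlinarith
  have hmpos : ∀ n : ℕ, 1 ≤ n → 0 < m n := by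
    intro n hn
    have h := hmge n
    have : (1 : ℝ) ≤ (n : ℝ) := by exact_mod_cast hn
    nlinarith
  -- the main pointwise bound
  have key : ∀ n ≥ 2, ‖xh n - xh (n - 1)‖ ≤ (Real.exp (-ν * c) / m (n - 1)) * ‖z n‖ := by
    intro n hn
    have hn1 : 1 ≤ n := le_trans (by norm_num) hn
    have hmn1pos : 0 < m (n - 1) := by
      apply hmpos
      omega
    have hmnpos : 0 < m n := hmpos n hn1
    have hmono : m (n - 1) ≤ m n := by
      rw [hm n hn1]
      have := (Real.exp_pos (-ν * f (x n))).le
      linarith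
    have hnum : Real.exp (-ν * f (x n)) ≤ Real.exp (-ν * c) := by
      apply Real.exp_le_exp.2
      have := (hf (x n)).1
      nlinarith [hν.le]
    rw [hstep n hn1, norm_smul]
    have hscal : 0 ≤ Real.exp (-ν * f (x n)) / m n :=
      div_nonneg (Real.exp_pos _).le hmnpos.le
    rw [Real.norm_eq_abs, abs_of_nonneg hscal]
    have hdiv : Real.exp (-ν * f (x n)) / m n ≤ Real.exp (-ν * c) / m (n - 1) :=
      div_le_div₀ (Real.exp_pos _).le hnum hmn1pos hmono
    exact mul_le_mul_of_nonneg_right hdiv (norm_nonneg _)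
  refine ⟨key, ?_⟩
  -- squeeze
  have hM0 : 0 ≤ M := le_trans (norm_nonneg _) (hM 0)
  have hub : ∀ n ≥ 2, ‖xh n - xh (n - 1)‖ ≤ (Real.exp (-ν * c) * M) / (((n : ℝ) - 1) * E) := by
    intro n hn
    have h1 := key n hn
    have hmn1pos : 0 < m (n - 1) := hmpos _ (by omega)
    have hcast : ((n - 1 : ℕ) : ℝ) = (n : ℝ) - 1 := by
      have : 1 ≤ n := by omega
      push_cast [this]; ring
    have hmge' : ((n : ℝ) - 1) * E ≤ m (n - 1) := by
      rw [← hcast]; exact hmge (n - 1)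
    have hden : 0 < ((n : ℝ) - 1) * E := by
      apply mul_pos _ hEpos
      have : (2 : ℝ) ≤ (n : ℝ) := by exact_mod_cast hn
      linarith
    calc ‖xh n - xh (n - 1)‖ ≤ (Real.exp (-ν * c) / m (n - 1)) * ‖z n‖ := h1
      _ ≤ (Real.exp (-ν * c) / (((n : ℝ) - 1) * E)) * M := by
          apply mul_le_mul _ (hM n) (norm_nonneg _)
            (div_nonneg (Real.exp_pos _).le hden.le)
          exact div_le_div_of_nonneg_left (Real.exp_pos _).le hden hmge'
      _ = (Real.exp (-ν * c) * M) / (((n : ℝ) - 1) * E) := by ring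
  have hbnd : Filter.Tendsto (fun n : ℕ => (Real.exp (-ν * c) * M) / (((n : ℝ) - 1) * E))
      Filter.atTop (nhds 0) := by
    apply Filter.Tendsto.div_atTop tendsto_const_nhds
    apply Filter.Tendsto.atTop_mul_const hEpos
    exact Filter.tendsto_atTop_add_const_right _ _ tendsto_natCast_atTop_atTop
  apply squeeze_zero' (Filter.Eventually.of_forall fun n => norm_nonneg _)
    _ hbnd
  filter_upwards [Filter.eventually_ge_atTop 2] with n hn
  exact hub n hn
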